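/- Let λ > 0, c > 1 and c̄ = (c+1)/(c−1), and suppose λ/n ≥ c·‖∇Λ(η₀)‖_∞. Let κ > 0 satisfy κ·‖δ_T‖ ≤ ‖√w_i·x_i'δ‖_{2,n} for every δ ∈ Δ_c̄, and let q̄ > 0 satisfy q̄·(1/n)∑_{i=1}^n w_i·|x_i'δ|³ ≤ ((1/n)∑_{i=1}^n w_i·(x_i'δ)²)^{3/2} for every δ ∈ Δ_c̄, with q̄ > 3·(1+1/c)·λ·√s/(n·κ). Then every global minimizer η̂ of η ↦ Λ(η) + (λ/n)·‖η‖₁ satisfies Λ(η̂) − Λ(η₀) ≤ 3·(1+1/c)·(λ·√s/(n·κ))². -/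

import Mathlib

open Finset

/-- The logistic link function `G(t) = exp t / (1 + exp t)`. -/
noncomputable def logistic (t : ℝ) : ℝ := Real.exp t / (1 + Real.exp t)

/-- Inner product `x_i'η` of the `i`-th design vector with `η`. -/
def xdot {n p : ℕ} (x : Fin n → Fin p → ℝ) (η : Fin p → ℝ) (i : Fin n) : ℝ :=
  ∑ j, x i j * η j

/-- Average logistic negative log-likelihood
`Λ(η) = (1/n)∑ᵢ [log(1+exp(x_i'η)) − y_i·(x_i'η)]`. -/
noncomputable def Lam {n p : ℕ} (x : Fin n → Fin p → ℝ) (y : Fin n → ℝ)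
    (η : Fin p → ℝ) : ℝ :=
  (1 / (n : ℝ)) * ∑ i, (Real.log (1 + Real.exp (xdot x η i)) - y i * xdot x η i)

/-- Gradient of `Λ`: `∇Λ(η) = (1/n)∑ᵢ (G(x_i'η) − y_i)·x_i`. -/
noncomputable def gradLam {n p : ℕ} (x : Fin n → Fin p → ℝ) (y : Fin n → ℝ)
    (η : Fin p → ℝ) (j : Fin p) : ℝ :=
  (1 / (n : ℝ)) * ∑ i, (logistic (xdot x η i) - y i) * x i j

/-- Sup-norm `‖∇Λ(η)‖_∞` of the gradient of `Λ`. -/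
noncomputable def gradLamSup {n p : ℕ} (x : Fin n → Fin p → ℝ) (y : Fin n → ℝ)
    (η : Fin p → ℝ) : ℝ :=
  ⨆ j : Fin p, |gradLam x y η j|

/-- The logistic weights `w_i = G(x_i'η₀)·(1 − G(x_i'η₀))`. -/
noncomputable def wgt {n p : ℕ} (x : Fin n → Fin p → ℝ) (η₀ : Fin p → ℝ) (i : Fin n) : ℝ :=
  logistic (xdot x η₀ i) * (1 - logistic (xdot x η₀ i))

/-- Weighted prediction norm `‖√w_i·x_i'δ‖_{2,n} = ((1/n)∑ᵢ w_i (x_i'δ)²)^{1/2}`. -/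
noncomputable def predNorm {n p : ℕ} (x : Fin n → Fin p → ℝ) (w : Fin n → ℝ)
    (δ : Fin p → ℝ) : ℝ :=
  Real.sqrt ((1 / (n : ℝ)) * ∑ i, w i * xdot x δ i ^ 2)

/-- Support of a coefficient vector. -/
noncomputable def supp {p : ℕ} (η : Fin p → ℝ) : Finset (Fin p) :=
  Finset.univ.filter (fun j => η j ≠ 0)

/-- ℓ1 norm of a vector in `ℝ^p`. -/
def l1norm {p : ℕ} (δ : Fin p → ℝ) : ℝ := ∑ j, |δ j|

/-- The restricted cone `Δ_c̄ = {δ : ‖δ_{T^c}‖₁ ≤ c̄·‖δ_T‖₁}` for a support set `T`. -/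
noncomputable def inCone {p : ℕ} (T : Finset (Fin p)) (cbar : ℝ) (δ : Fin p → ℝ) : Prop :=
  ∑ j ∈ Tᶜ, |δ j| ≤ cbar * ∑ j ∈ T, |δ j|

/-!
The self-concordance of the logistic loss, `|G''| ≤ G'`, bounds its Bregman divergence from
below by `w (u²/2 - |u|³/6)` pointwise, hence, on the cone and by the nonlinear-impact condition,
the divergence of `Λ` at `η₀` in direction `δ` by `r²/2 - r³/(6q̄)` with `r = ‖√w x'δ‖_{2,n}`.
For `δ = η̂ - η₀` the basic inequality of the lasso (minimality of `η̂` against `η₀`, plus the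
penalty level dominating the score) puts `δ` in the cone `Δ_c̄` and bounds the divergence above
by `(1 + 1/c) λ‖δ_T‖₁/n ≤ (1 + 1/c) (λ√s/(nκ)) r`. The cone is invariant under scaling, and by
convexity the divergence in direction `tδ` is at most `t` times that in direction `δ`, so
`(tr)²/2 - (tr)³/(6q̄) ≤ t (1 + 1/c) (λ√s/(nκ)) r` for `t ∈ [0, 1]`; at `tr = 3 (1 + 1/c) λ√s/(nκ)`
this contradicts `q̄ > 3 (1 + 1/c) λ√s/(nκ)` unless `r` is at most that value. Then
`Λ(η̂) - Λ(η₀) ≤ λ‖δ_T‖₁/n ≤ (λ√s/(nκ)) r` gives the bound.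
-/

noncomputable def softplus (t : ℝ) : ℝ := Real.log (1 + Real.exp t)

lemma logistic_eq_sigmoid : logistic = Real.sigmoid := by
  funext t
  rw [logistic, Real.sigmoid_def, Real.exp_neg]
  field_simp
  ring

lemma logistic_mul_one_sub_nonneg (t : ℝ) : 0 ≤ logistic t * (1 - logistic t) := by
  rw [logistic_eq_sigmoid]
  exact mul_nonneg (Real.sigmoid_nonneg t) (sub_nonneg.2 (Real.sigmoid_le_one t))

lemma logistic_neg (t : ℝ) : logistic (-t) = 1 - logistic t := by
  simp only [logistic_eq_sigmoid, Real.sigmoid_neg]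

lemma hasDerivAt_softplus (t : ℝ) : HasDerivAt softplus (logistic t) t := by
  have h := ((Real.hasDerivAt_exp t).const_add 1).log (by positivity)
  rwa [← logistic] at h

lemma softplus_neg (t : ℝ) : softplus (-t) = softplus t - t := by
  have h : 1 + Real.exp (-t) = (1 + Real.exp t) / Real.exp t := by
    rw [Real.exp_neg]; field_simp; ring
  rw [softplus, softplus, h, Real.log_div (by positivity) (by positivity), Real.log_exp]

lemma convexOn_softplus : ConvexOn ℝ Set.univ softplus := by
  refine Monotone.convexOn_univ_of_deriv (fun t => (hasDerivAt_softplus t).differentiableAt) ?_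
  rw [show deriv softplus = logistic from funext fun t => (hasDerivAt_softplus t).deriv,
    logistic_eq_sigmoid]
  exact Real.sigmoid_monotone

noncomputable def softplusBregman (a u : ℝ) : ℝ := softplus (a + u) - softplus a - logistic a * u

lemma softplusBregman_neg_neg (a u : ℝ) : softplusBregman (-a) (-u) = softplusBregman a u := by
  rw [softplusBregman, softplusBregman, ← neg_add, softplus_neg, softplus_neg, logistic_neg]
  ring

lemma hasDerivAt_softplusBregman (a u : ℝ) :
    HasDerivAt (softplusBregman a) (logistic (a + u) - logistic a) u := by
  have h := (((hasDerivAt_softplus (a + u)).comp u ((hasDerivAt_id u).const_add a)).sub_const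
    (softplus a)).sub ((hasDerivAt_id u).const_mul (logistic a))
  exact h.congr_deriv (by ring)

lemma nonneg_of_hasDerivAt_nonneg {f f' : ℝ → ℝ} (hf : ∀ u, HasDerivAt f (f' u) u)
    (h₀ : 0 ≤ f 0) (hf' : ∀ u, 0 < u → 0 ≤ f' u) {u : ℝ} (hu : 0 ≤ u) : 0 ≤ f u := by
  have hmono : MonotoneOn f (Set.Ici 0) :=
    monotoneOn_of_hasDerivWithinAt_nonneg (convex_Ici 0)
      (continuous_iff_continuousAt.2 fun u => (hf u).continuousAt).continuousOn
      (fun u _ => (hf u).hasDerivWithinAt) (fun u hu => hf' u (by simpa using hu))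
  exact h₀.trans (hmono Set.self_mem_Ici hu hu)

lemma softplusBregman_nonneg (a u : ℝ) : 0 ≤ softplusBregman a u := by
  have of_nonneg : ∀ a u, 0 ≤ u → 0 ≤ softplusBregman a u := fun a u hu =>
    nonneg_of_hasDerivAt_nonneg (hasDerivAt_softplusBregman a) (by simp [softplusBregman])
      (fun v hv => by
        rw [sub_nonneg, logistic_eq_sigmoid]
        exact Real.sigmoid_monotone (by linarith)) hu
  rcases le_total 0 u with hu | hu
  · exact of_nonneg a u hu
  · simpa [softplusBregman_neg_neg] using of_nonneg (-a) (-u) (by linarith)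

lemma softplusBregman_mul_le (a u : ℝ) {t : ℝ} (ht₀ : 0 ≤ t) (ht₁ : t ≤ 1) :
    softplusBregman a (t * u) ≤ t * softplusBregman a u := by
  have h := convexOn_softplus.2 (Set.mem_univ a) (Set.mem_univ (a + u)) (sub_nonneg.2 ht₁) ht₀
    (by ring)
  simp only [smul_eq_mul] at h
  rw [show (1 - t) * a + t * (a + u) = a + t * u by ring] at h
  rw [softplusBregman, softplusBregman]
  linarith

lemma sub_sq_div_two_le_one_sub_exp_neg {u : ℝ} (hu : 0 ≤ u) :
    u - u ^ 2 / 2 ≤ 1 - Real.exp (-u) := by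
  have hexp := Real.quadratic_le_exp_of_nonneg hu
  have hpos : 0 < 1 - u + u ^ 2 / 2 := by nlinarith [sq_nonneg (u - 1)]
  have h : (Real.exp u)⁻¹ ≤ 1 - u + u ^ 2 / 2 := by
    rw [inv_le_iff_one_le_mul₀ (Real.exp_pos u)]
    nlinarith [mul_le_mul_of_nonneg_left hexp hpos.le, sq_nonneg (u ^ 2)]
  rw [Real.exp_neg]
  linarith

lemma mul_one_sub_exp_neg_le_logistic_add_sub (a u : ℝ) :
    logistic a * (1 - logistic a) * (1 - Real.exp (-u)) ≤ logistic (a + u) - logistic a := by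
  have hE : 0 < Real.exp a := Real.exp_pos a
  have hU : 0 < Real.exp u := Real.exp_pos u
  rw [logistic, logistic, Real.exp_add, Real.exp_neg]
  set E := Real.exp a
  set U := Real.exp u
  have hdiff : E * U / (1 + E * U) - E / (1 + E)
      - E / (1 + E) * (1 - E / (1 + E)) * (1 - U⁻¹)
      = E * (U - 1) ^ 2 / ((1 + E) ^ 2 * (1 + E * U) * U) := by
    field_simp
    ring
  have : 0 ≤ E * (U - 1) ^ 2 / ((1 + E) ^ 2 * (1 + E * U) * U) := by positivity
  linarith

lemma mul_cubic_le_softplusBregman_of_nonneg (a : ℝ) {u : ℝ} (hu : 0 ≤ u) :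
    logistic a * (1 - logistic a) * (u ^ 2 / 2 - u ^ 3 / 6) ≤ softplusBregman a u := by
  set w := logistic a * (1 - logistic a)
  have hw : 0 ≤ w := logistic_mul_one_sub_nonneg a
  have hderiv : ∀ v, HasDerivAt (fun v => softplusBregman a v - w * (v ^ 2 / 2 - v ^ 3 / 6))
      (logistic (a + v) - logistic a - w * (v - v ^ 2 / 2)) v := fun v =>
    ((hasDerivAt_softplusBregman a v).sub
      ((((hasDerivAt_pow 2 v).div_const 2).sub
        ((hasDerivAt_pow 3 v).div_const 6)).const_mul w)).congr_deriv (by push_cast; ring)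
  have h := nonneg_of_hasDerivAt_nonneg hderiv (by simp [softplusBregman]) (fun v hv => by
    nlinarith [mul_one_sub_exp_neg_le_logistic_add_sub a v,
      mul_le_mul_of_nonneg_left (sub_sq_div_two_le_one_sub_exp_neg hv.le) hw]) hu
  linarith

lemma mul_cubic_le_softplusBregman (a u : ℝ) :
    logistic a * (1 - logistic a) * (u ^ 2 / 2 - |u| ^ 3 / 6) ≤ softplusBregman a u := by
  rcases le_total 0 u with hu | hu
  · simpa [abs_of_nonneg hu] using mul_cubic_le_softplusBregman_of_nonneg a hu
  · have h := mul_cubic_le_softplusBregman_of_nonneg (-a) (neg_nonneg.2 hu)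
    rwa [softplusBregman_neg_neg, logistic_neg, sub_sub_cancel, mul_comm (1 - logistic a),
      neg_sq, ← abs_of_nonpos hu] at h

section LogisticLoss

variable {n p : ℕ} (x : Fin n → Fin p → ℝ)

lemma xdot_add (η δ : Fin p → ℝ) (i : Fin n) : xdot x (η + δ) i = xdot x η i + xdot x δ i := by
  simp only [xdot, Pi.add_apply, mul_add, Finset.sum_add_distrib]

lemma xdot_smul (t : ℝ) (δ : Fin p → ℝ) (i : Fin n) : xdot x (t • δ) i = t * xdot x δ i := by
  simp only [xdot, Pi.smul_apply, smul_eq_mul, Finset.mul_sum]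
  exact Finset.sum_congr rfl fun j _ => by ring

lemma predNorm_smul (w : Fin n → ℝ) (t : ℝ) (δ : Fin p → ℝ) :
    predNorm x w (t • δ) = |t| * predNorm x w δ := by
  have h : (1 / (n : ℝ)) * ∑ i, w i * xdot x (t • δ) i ^ 2
      = t ^ 2 * ((1 / (n : ℝ)) * ∑ i, w i * xdot x δ i ^ 2) := by
    simp only [xdot_smul, Finset.mul_sum]
    exact Finset.sum_congr rfl fun i _ => by ring
  rw [predNorm, predNorm, h, Real.sqrt_mul (sq_nonneg t), Real.sqrt_sq_eq_abs]

variable (y : Fin n → ℝ)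

noncomputable def lamBregman (η δ : Fin p → ℝ) : ℝ :=
  Lam x y (η + δ) - Lam x y η - ∑ j, gradLam x y η j * δ j

lemma sum_gradLam_mul (η δ : Fin p → ℝ) :
    ∑ j, gradLam x y η j * δ j
      = (1 / (n : ℝ)) * ∑ i, (logistic (xdot x η i) - y i) * xdot x δ i := by
  simp only [gradLam, xdot, Finset.mul_sum, Finset.sum_mul]
  rw [Finset.sum_comm]
  exact Finset.sum_congr rfl fun i _ => Finset.sum_congr rfl fun j _ => by ring

lemma lamBregman_eq (η δ : Fin p → ℝ) :
    lamBregman x y η δ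
      = (1 / (n : ℝ)) * ∑ i, softplusBregman (xdot x η i) (xdot x δ i) := by
  rw [lamBregman, sum_gradLam_mul, Lam, Lam, ← mul_sub, ← mul_sub, ← Finset.sum_sub_distrib,
    ← Finset.sum_sub_distrib]
  congr 1
  refine Finset.sum_congr rfl fun i _ => ?_
  rw [xdot_add, softplusBregman, softplus, softplus]
  ring

lemma lamBregman_nonneg (η δ : Fin p → ℝ) : 0 ≤ lamBregman x y η δ := by
  rw [lamBregman_eq]
  exact mul_nonneg (by positivity) (Finset.sum_nonneg fun i _ => softplusBregman_nonneg _ _)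

lemma lamBregman_smul_le (η δ : Fin p → ℝ) {t : ℝ} (ht₀ : 0 ≤ t) (ht₁ : t ≤ 1) :
    lamBregman x y η (t • δ) ≤ t * lamBregman x y η δ := by
  rw [lamBregman_eq, lamBregman_eq, mul_left_comm t, Finset.mul_sum _ _ t]
  gcongr with i
  rw [xdot_smul]
  exact softplusBregman_mul_le _ _ ht₀ ht₁

lemma predNorm_cubic_le_lamBregman (η δ : Fin p → ℝ) {qbar : ℝ} (hqbar : 0 < qbar)
    (hq : qbar * ((1 / (n : ℝ)) * ∑ i, wgt x η i * |xdot x δ i| ^ 3)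
      ≤ ((1 / (n : ℝ)) * ∑ i, wgt x η i * xdot x δ i ^ 2) ^ ((3 : ℝ) / 2)) :
    predNorm x (wgt x η) δ ^ 2 / 2 - predNorm x (wgt x η) δ ^ 3 / (6 * qbar)
      ≤ lamBregman x y η δ := by
  set Q := (1 / (n : ℝ)) * ∑ i, wgt x η i * xdot x δ i ^ 2
  set C := (1 / (n : ℝ)) * ∑ i, wgt x η i * |xdot x δ i| ^ 3
  set r := predNorm x (wgt x η) δ
  have hQ : 0 ≤ Q := mul_nonneg (by positivity)
    (Finset.sum_nonneg fun i _ => mul_nonneg (logistic_mul_one_sub_nonneg _) (sq_nonneg _))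
  have hr₀ : 0 ≤ r := Real.sqrt_nonneg _
  have hr : r ^ 2 = Q := Real.sq_sqrt hQ
  have hQr : Q ^ ((3 : ℝ) / 2) = r ^ 3 := by
    rw [← hr, ← Real.rpow_natCast r 2, ← Real.rpow_mul hr₀]
    norm_num
  have hC : C ≤ r ^ 3 / qbar := by
    rw [le_div_iff₀ hqbar, mul_comm, ← hQr]
    exact hq
  have hlow : Q / 2 - C / 6 ≤ lamBregman x y η δ := by
    rw [lamBregman_eq]
    calc Q / 2 - C / 6
        = (1 / (n : ℝ)) * ∑ i, wgt x η i * (xdot x δ i ^ 2 / 2 - |xdot x δ i| ^ 3 / 6) := by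
          simp only [Q, C, Finset.mul_sum, Finset.sum_div, ← Finset.sum_sub_distrib]
          exact Finset.sum_congr rfl fun i _ => by ring
      _ ≤ _ := by
          gcongr with i
          exact mul_cubic_le_softplusBregman _ _
  have : r ^ 3 / (6 * qbar) = r ^ 3 / qbar / 6 := by ring
  linarith

end LogisticLoss

section Lasso

variable {p : ℕ}

lemma l1norm_eq_sum_add_sum_compl (T : Finset (Fin p)) (v : Fin p → ℝ) :
    l1norm v = ∑ j ∈ T, |v j| + ∑ j ∈ Tᶜ, |v j| :=
  (Finset.sum_add_sum_compl T _).symm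

lemma l1norm_sub_le (η₀ η : Fin p → ℝ) :
    l1norm η₀ - l1norm η
      ≤ ∑ j ∈ supp η₀, |(η - η₀) j| - ∑ j ∈ (supp η₀)ᶜ, |(η - η₀) j| := by
  have hzero : ∀ j ∈ (supp η₀)ᶜ, η₀ j = 0 := fun j hj => by simpa [supp] using hj
  have hT : ∑ j ∈ supp η₀, |η₀ j| - ∑ j ∈ supp η₀, |η j| ≤ ∑ j ∈ supp η₀, |(η - η₀) j| := by
    rw [← Finset.sum_sub_distrib]
    refine Finset.sum_le_sum fun j _ => ?_
    rw [Pi.sub_apply, abs_sub_comm]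
    exact abs_sub_abs_le_abs_sub _ _
  have hTc : ∑ j ∈ (supp η₀)ᶜ, |(η - η₀) j|
      = ∑ j ∈ (supp η₀)ᶜ, |η j| - ∑ j ∈ (supp η₀)ᶜ, |η₀ j| := by
    rw [← Finset.sum_sub_distrib]
    exact Finset.sum_congr rfl fun j hj => by simp [hzero j hj]
  rw [l1norm_eq_sum_add_sum_compl (supp η₀) η₀, l1norm_eq_sum_add_sum_compl (supp η₀) η, hTc]
  linarith

lemma abs_sum_mul_le_iSup_mul_l1norm (g v : Fin p → ℝ) :
    |∑ j, g j * v j| ≤ (⨆ j, |g j|) * l1norm v := by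
  rw [l1norm, Finset.mul_sum]
  refine (Finset.abs_sum_le_sum_abs _ _).trans (Finset.sum_le_sum fun j _ => ?_)
  rw [abs_mul]
  exact mul_le_mul_of_nonneg_right
    (le_ciSup (f := fun j => |g j|) (Set.finite_range _).bddAbove j) (abs_nonneg _)

lemma inCone_smul {T : Finset (Fin p)} {cbar : ℝ} {δ : Fin p → ℝ} (h : inCone T cbar δ)
    {t : ℝ} (ht : 0 ≤ t) : inCone T cbar (t • δ) := by
  simp only [inCone, Pi.smul_apply, smul_eq_mul, abs_mul, abs_of_nonneg ht,
    ← Finset.mul_sum] at h ⊢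
  rw [mul_left_comm]
  exact mul_le_mul_of_nonneg_left h ht

lemma sum_abs_le_sqrt_card_mul_sqrt (T : Finset (Fin p)) (δ : Fin p → ℝ) :
    ∑ j ∈ T, |δ j| ≤ Real.sqrt T.card * Real.sqrt (∑ j ∈ T, δ j ^ 2) := by
  simpa using Real.sum_mul_le_sqrt_mul_sqrt T (fun _ => 1) (fun j => |δ j|)

lemma sum_abs_le_of_restricted_eigenvalue {T : Finset (Fin p)} {δ : Fin p → ℝ} {κ r : ℝ}
    (hκ : 0 < κ) (hRE : κ * Real.sqrt (∑ j ∈ T, δ j ^ 2) ≤ r) :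
    ∑ j ∈ T, |δ j| ≤ Real.sqrt T.card * r / κ := by
  rw [le_div_iff₀ hκ]
  calc (∑ j ∈ T, |δ j|) * κ ≤ Real.sqrt T.card * Real.sqrt (∑ j ∈ T, δ j ^ 2) * κ :=
        mul_le_mul_of_nonneg_right (sum_abs_le_sqrt_card_mul_sqrt T δ) hκ.le
    _ = Real.sqrt T.card * (κ * Real.sqrt (∑ j ∈ T, δ j ^ 2)) := by ring
    _ ≤ Real.sqrt T.card * r := mul_le_mul_of_nonneg_left hRE (Real.sqrt_nonneg _)

variable {n : ℕ} {x : Fin n → Fin p → ℝ} {y : Fin n → ℝ} {η₀ η : Fin p → ℝ} {μ c : ℝ}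

lemma abs_sum_gradLam_mul_le (hc : 0 < c) (hpen : c * gradLamSup x y η₀ ≤ μ) (v : Fin p → ℝ) :
    |∑ j, gradLam x y η₀ j * v j| ≤ μ / c * l1norm v := by
  refine (abs_sum_mul_le_iSup_mul_l1norm _ v).trans
    (mul_le_mul_of_nonneg_right ?_ (Finset.sum_nonneg fun j _ => abs_nonneg (v j)))
  rw [le_div_iff₀ hc, mul_comm]
  exact hpen

lemma Lam_sub_le_of_penalized_le (hμ : 0 ≤ μ)
    (hmin : Lam x y η + μ * l1norm η ≤ Lam x y η₀ + μ * l1norm η₀) :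
    Lam x y η - Lam x y η₀
      ≤ μ * (∑ j ∈ supp η₀, |(η - η₀) j| - ∑ j ∈ (supp η₀)ᶜ, |(η - η₀) j|) := by
  nlinarith [mul_le_mul_of_nonneg_left (l1norm_sub_le η₀ η) hμ]

lemma inCone_of_penalized_le (hc : 1 < c) (hμ : 0 < μ) (hpen : c * gradLamSup x y η₀ ≤ μ)
    (hmin : Lam x y η + μ * l1norm η ≤ Lam x y η₀ + μ * l1norm η₀) :
    inCone (supp η₀) ((c + 1) / (c - 1)) (η - η₀) := by
  have hexcess := Lam_sub_le_of_penalized_le hμ.le hmin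
  have hgrad := neg_abs_le (∑ j, gradLam x y η₀ j * (η - η₀) j)
  have hbreg := lamBregman_nonneg x y η₀ (η - η₀)
  rw [lamBregman, add_sub_cancel] at hbreg
  have habs := abs_sum_gradLam_mul_le (by linarith) hpen (η - η₀)
  rw [l1norm_eq_sum_add_sum_compl (supp η₀)] at habs
  set ST := ∑ j ∈ supp η₀, |(η - η₀) j|
  set STc := ∑ j ∈ (supp η₀)ᶜ, |(η - η₀) j|
  have hscaled : μ / c * (-(ST + STc)) ≤ μ / c * (c * (ST - STc)) := by
    have : μ * (ST - STc) = μ / c * (c * (ST - STc)) := by field_simp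
    linarith
  have := le_of_mul_le_mul_left hscaled (by positivity)
  rw [inCone, div_mul_eq_mul_div, le_div_iff₀ (by linarith)]
  linarith

lemma lamBregman_le_of_penalized_le (hc : 1 < c) (hμ : 0 ≤ μ)
    (hpen : c * gradLamSup x y η₀ ≤ μ)
    (hmin : Lam x y η + μ * l1norm η ≤ Lam x y η₀ + μ * l1norm η₀) :
    lamBregman x y η₀ (η - η₀) ≤ (1 + 1 / c) * μ * ∑ j ∈ supp η₀, |(η - η₀) j| := by
  have hexcess := Lam_sub_le_of_penalized_le hμ hmin
  have hgrad := neg_abs_le (∑ j, gradLam x y η₀ j * (η - η₀) j)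
  have habs := abs_sum_gradLam_mul_le (by linarith) hpen (η - η₀)
  rw [l1norm_eq_sum_add_sum_compl (supp η₀)] at habs
  have hSTc : 0 ≤ ∑ j ∈ (supp η₀)ᶜ, |(η - η₀) j| := Finset.sum_nonneg fun j _ => abs_nonneg _
  have hμc : μ / c ≤ μ := div_le_self hμ hc.le
  rw [lamBregman, add_sub_cancel]
  set ST := ∑ j ∈ supp η₀, |(η - η₀) j|
  set STc := ∑ j ∈ (supp η₀)ᶜ, |(η - η₀) j|
  have hsplit : (1 + 1 / c) * μ * ST = μ * (ST - STc) + μ / c * (ST + STc) + (μ - μ / c) * STc := by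
    ring
  nlinarith [mul_nonneg (sub_nonneg.2 hμc) hSTc]

end Lasso

lemma le_three_mul_of_forall_cubic_le {B q r : ℝ} (hB : 0 < B) (hq : 3 * B < q)
    (h : ∀ t, 0 ≤ t → t ≤ 1 → (t * r) ^ 2 / 2 - (t * r) ^ 3 / (6 * q) ≤ t * (B * r)) :
    r ≤ 3 * B := by
  by_contra! hlt
  have hr₀ : 0 < r := by linarith
  have h3B := h (3 * B / r) (by positivity) ((div_le_one hr₀).2 hlt.le)
  rw [mul_left_comm, div_mul_cancel₀ _ hr₀.ne'] at h3B
  have h6 : 3 * B ^ 2 / 2 ≤ (3 * B) ^ 3 / (6 * q) := by linarith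
  rw [le_div_iff₀ (by linarith)] at h6
  have h9 : 9 * B ^ 2 * q ≤ 9 * B ^ 2 * (3 * B) := by linarith
  linarith [le_of_mul_le_mul_left h9 (by positivity)]

theorem lasso_logistic_excess_loss_general {n p : ℕ} (hn : 0 < n)
    (x : Fin n → Fin p → ℝ) (y : Fin n → ℝ)
    (η₀ : Fin p → ℝ) (hs : 1 ≤ (supp η₀).card)
    (lam c : ℝ) (hlam : 0 < lam) (hc : 1 < c)
    (hpen : c * gradLamSup x y η₀ ≤ lam / (n : ℝ))
    (κ : ℝ) (hκ : 0 < κ)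
    (hRE : ∀ δ : Fin p → ℝ, inCone (supp η₀) ((c + 1) / (c - 1)) δ →
      κ * Real.sqrt (∑ j ∈ supp η₀, δ j ^ 2) ≤ predNorm x (wgt x η₀) δ)
    (qbar : ℝ) (hqbar : 0 < qbar)
    (hq : ∀ δ : Fin p → ℝ, inCone (supp η₀) ((c + 1) / (c - 1)) δ →
      qbar * ((1 / (n : ℝ)) * ∑ i, wgt x η₀ i * |xdot x δ i| ^ 3)
        ≤ ((1 / (n : ℝ)) * ∑ i, wgt x η₀ i * xdot x δ i ^ 2) ^ ((3 : ℝ) / 2))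
    (hqlarge : 3 * (1 + 1 / c) * lam * Real.sqrt ((supp η₀).card) / ((n : ℝ) * κ) < qbar)
    (ηhat : Fin p → ℝ)
    (hmin : ∀ η : Fin p → ℝ,
      Lam x y ηhat + (lam / (n : ℝ)) * l1norm ηhat
        ≤ Lam x y η + (lam / (n : ℝ)) * l1norm η) :
    Lam x y ηhat - Lam x y η₀
      ≤ 3 * (1 + 1 / c) * (lam * Real.sqrt ((supp η₀).card) / ((n : ℝ) * κ)) ^ 2 := by
  set δ := ηhat - η₀
  set r := predNorm x (wgt x η₀) δ
  set ρ := lam * Real.sqrt ((supp η₀).card) / ((n : ℝ) * κ)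
  have hμ : 0 < lam / (n : ℝ) := by positivity
  have hρ : 0 < ρ := by
    have : (0 : ℝ) < (supp η₀).card := by exact_mod_cast hs
    positivity
  have hcone := inCone_of_penalized_le hc hμ hpen (hmin η₀)
  have hST : lam / (n : ℝ) * ∑ j ∈ supp η₀, |δ j| ≤ ρ * r :=
    calc lam / (n : ℝ) * ∑ j ∈ supp η₀, |δ j|
        ≤ lam / (n : ℝ) * (Real.sqrt ((supp η₀).card) * r / κ) :=
          mul_le_mul_of_nonneg_left (sum_abs_le_of_restricted_eigenvalue hκ (hRE δ hcone)) hμ.le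
      _ = ρ * r := by ring
  have hbreg : lamBregman x y η₀ δ ≤ (1 + 1 / c) * ρ * r := by
    refine (lamBregman_le_of_penalized_le hc hμ.le hpen (hmin η₀)).trans ?_
    rw [mul_assoc, mul_assoc]
    gcongr
  have hr : r ≤ 3 * ((1 + 1 / c) * ρ) := by
    refine le_three_mul_of_forall_cubic_le (by positivity)
      (by simpa [ρ, mul_div_assoc, mul_assoc] using hqlarge) fun t ht₀ ht₁ => ?_
    have h := predNorm_cubic_le_lamBregman x y η₀ (t • δ) hqbar (hq _ (inCone_smul hcone ht₀))
    rw [predNorm_smul, abs_of_nonneg ht₀] at h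
    exact h.trans <|
      (lamBregman_smul_le x y η₀ δ ht₀ ht₁).trans (mul_le_mul_of_nonneg_left hbreg ht₀)
  calc Lam x y ηhat - Lam x y η₀ ≤ lam / (n : ℝ) * ∑ j ∈ supp η₀, |δ j| := by
        have hSTc : 0 ≤ ∑ j ∈ (supp η₀)ᶜ, |δ j| := Finset.sum_nonneg fun j _ => abs_nonneg _
        nlinarith [Lam_sub_le_of_penalized_le hμ.le (hmin η₀)]
    _ ≤ ρ * (3 * ((1 + 1 / c) * ρ)) := hST.trans (by gcongr)
    _ = 3 * (1 + 1 / c) * ρ ^ 2 := by ring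

/-- Excess-loss bound for the ℓ1-penalized logistic regression estimator: under the
penalty-level, restricted-eigenvalue and nonlinear-impact conditions over the cone
`Δ_c̄`, with `q̄ > 3(1+1/c)λ√s/(nκ)`, any global minimizer `η̂` of the ℓ1-penalized
logistic criterion satisfies `Λ(η̂) − Λ(η₀) ≤ 3(1+1/c)(λ√s/(nκ))²`. -/
theorem lasso_logistic_excess_loss {n p : ℕ} (hn : 0 < n) (hp : 0 < p)
    (x : Fin n → Fin p → ℝ) (y : Fin n → ℝ) (hy : ∀ i, y i = 0 ∨ y i = 1)
    (η₀ : Fin p → ℝ) (hs : 1 ≤ (supp η₀).card)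
    (lam c : ℝ) (hlam : 0 < lam) (hc : 1 < c)
    (hpen : c * gradLamSup x y η₀ ≤ lam / (n : ℝ))
    (κ : ℝ) (hκ : 0 < κ)
    (hRE : ∀ δ : Fin p → ℝ, inCone (supp η₀) ((c + 1) / (c - 1)) δ →
      κ * Real.sqrt (∑ j ∈ supp η₀, δ j ^ 2) ≤ predNorm x (wgt x η₀) δ)
    (qbar : ℝ) (hqbar : 0 < qbar)
    (hq : ∀ δ : Fin p → ℝ, inCone (supp η₀) ((c + 1) / (c - 1)) δ →
      qbar * ((1 / (n : ℝ)) * ∑ i, wgt x η₀ i * |xdot x δ i| ^ 3)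
        ≤ ((1 / (n : ℝ)) * ∑ i, wgt x η₀ i * xdot x δ i ^ 2) ^ ((3 : ℝ) / 2))
    (hqlarge : 3 * (1 + 1 / c) * lam * Real.sqrt ((supp η₀).card) / ((n : ℝ) * κ) < qbar)
    (ηhat : Fin p → ℝ)
    (hmin : ∀ η : Fin p → ℝ,
      Lam x y ηhat + (lam / (n : ℝ)) * l1norm ηhat
        ≤ Lam x y η + (lam / (n : ℝ)) * l1norm η) :
    Lam x y ηhat - Lam x y η₀
      ≤ 3 * (1 + 1 / c) * (lam * Real.sqrt ((supp η₀).card) / ((n : ℝ) * κ)) ^ 2 :=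
  lasso_logistic_excess_loss_general hn x y η₀ hs lam c hlam hc hpen κ hκ hRE qbar hqbar hq hqlarge
    ηhat hmin
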